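/- Let s > 0 and define G̃_s(x) = ∫₀^∞ exp(−πx²/y − y/(4π))·y^{−(1+(1−s)/2)} dy for x ∈ ℝ. Then for every p ∈ [1,∞] with s > 1 − 1/p (where 1/∞ = 0), the function G̃_s belongs to L^p(ℝ). -/

import Mathlib

open MeasureTheory Real
open scoped ENNReal NNReal

/-- The (unnormalized) Bessel potential kernel of order `s` in one dimension, given by the
subordination formula `G̃ₛ(x) = ∫₀^∞ e^{-πx²/y - y/(4π)} y^{-(1+(1-s)/2)} dy`. -/
noncomputable def besselKernel (s : ℝ) (x : ℝ) : ℝ :=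
  ∫ y in Set.Ioi (0:ℝ),
    Real.exp (-(π * x ^ 2) / y - y / (4 * π)) * y ^ (-(1 + (1 - s) / 2))

/-!
By AM-GM, `π x² / y + y / (4π) ≥ |x|`, so half of the exponent of the integrand yields the factor
`e^{-|x|/2}` while the other half still tames one end of the `y`-integral. For `s > 1` the
remaining `e^{-y/(8π)}` gives `G̃ₛ(x) ≤ C e^{-|x|/2}`. For `s < 1` the remaining `e^{-πx²/(2y)}`
and the substitution `y = x² t` give `G̃ₛ(x) ≤ C |x|^{s-1} e^{-|x|/2}`, which is in `Lᵖ` as soon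
as `(s - 1) p > -1`, i.e. `s > 1 - 1/p`. For `s ≤ 1` the kernel is dominated by `G̃_{s₁} + G̃₂`
with `1 - 1/p < s₁ < s`, since `y^a ≤ y^{a₁} + y^{a₂}` whenever `a₁ ≤ a ≤ a₂`.
-/

open Set

lemma integrableOn_rpow_mul_exp_neg_mul {a b : ℝ} (ha : -1 < a) (hb : 0 < b) :
    IntegrableOn (fun y : ℝ => y ^ a * exp (-b * y)) (Ioi 0) := by
  simpa only [rpow_one] using integrableOn_rpow_mul_exp_neg_mul_rpow ha one_pos hb

lemma integrableOn_rpow_mul_exp_neg_div {a c : ℝ} (ha : a < -1) (hc : 0 < c) :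
    IntegrableOn (fun y : ℝ => y ^ a * exp (-c / y)) (Ioi 0) := by
  -- substitute `y = t⁻¹`
  rw [← integrableOn_Ioi_comp_rpow_iff' _ (by norm_num : (-1 : ℝ) ≠ 0)]
  refine (integrableOn_rpow_mul_exp_neg_mul (a := -a - 2) (by linarith) hc).congr_fun
    (fun y (hy : 0 < y) => ?_) measurableSet_Ioi
  rw [smul_eq_mul, rpow_neg_one, div_inv_eq_mul, inv_rpow hy.le, ← rpow_neg hy.le,
    ← mul_assoc, ← rpow_add hy]
  ring_nf

lemma integral_rpow_mul_exp_neg_mul_div {a c k : ℝ} (hk : 0 < k) :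
    ∫ y in Ioi 0, y ^ a * exp (-(k * c) / y) =
      k ^ (a + 1) * ∫ y in Ioi 0, y ^ a * exp (-c / y) := by
  have h := integral_comp_mul_left_Ioi (fun y => y ^ a * exp (-(k * c) / y)) 0 hk
  have hscale : ∀ t ∈ Ioi (0 : ℝ),
      (k * t) ^ a * exp (-(k * c) / (k * t)) = k ^ a * (t ^ a * exp (-c / t)) := by
    intro t (ht : 0 < t)
    rw [mul_rpow hk.le ht.le, neg_div, neg_div, mul_div_mul_left _ _ hk.ne', mul_assoc]
  rw [setIntegral_congr_fun measurableSet_Ioi hscale, integral_const_mul, mul_zero, smul_eq_mul,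
    eq_inv_mul_iff_mul_eq₀ hk.ne'] at h
  rw [← h, ← mul_assoc, rpow_add_one hk.ne', mul_comm k]

lemma rpow_le_rpow_add_rpow {y a a₁ a₂ : ℝ} (hy : 0 < y) (h₁ : a₁ ≤ a) (h₂ : a ≤ a₂) :
    y ^ a ≤ y ^ a₁ + y ^ a₂ := by
  rcases le_total y 1 with hy1 | hy1
  · linarith [rpow_le_rpow_of_exponent_ge hy hy1 h₁, rpow_nonneg hy.le a₂]
  · linarith [rpow_le_rpow_of_exponent_le hy1 h₂, rpow_nonneg hy.le a₁]

lemma integrable_abs_rpow_mul_exp_neg_mul_abs {a b : ℝ} (ha : -1 < a) (hb : 0 < b) :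
    Integrable (fun x : ℝ => |x| ^ a * exp (-b * |x|)) := by
  have := (integrable_fun_norm_addHaar (E := ℝ) volume (f := fun y => y ^ a * exp (-b * y))).2
  simpa [Real.norm_eq_abs] using this (by simpa using integrableOn_rpow_mul_exp_neg_mul ha hb)

lemma memLp_abs_rpow_mul_exp_neg_mul_abs {p : ℝ≥0∞} (hp0 : p ≠ 0) (hp : p ≠ ∞) {a b : ℝ}
    (ha : -1 < a * p.toReal) (hb : 0 < b) :
    MemLp (fun x : ℝ => |x| ^ a * exp (-b * |x|)) p := by
  rw [← integrable_norm_rpow_iff (by fun_prop) hp0 hp]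
  refine (integrable_abs_rpow_mul_exp_neg_mul_abs ha
    (mul_pos hb (ENNReal.toReal_pos hp0 hp))).congr (ae_of_all _ fun x => ?_)
  dsimp only
  rw [norm_mul, norm_of_nonneg (rpow_nonneg (abs_nonneg x) a), norm_of_nonneg (exp_nonneg _),
    mul_rpow (rpow_nonneg (abs_nonneg x) a) (exp_nonneg _), ← rpow_mul (abs_nonneg x),
    ← exp_mul]
  ring_nf

lemma memLp_exp_neg_mul_abs (p : ℝ≥0∞) {b : ℝ} (hb : 0 < b) :
    MemLp (fun x : ℝ => exp (-b * |x|)) p := by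
  rcases eq_or_ne p ∞ with rfl | hp
  · refine memLp_top_of_bound (by fun_prop) 1 (ae_of_all _ fun x => ?_)
    rw [norm_of_nonneg (exp_nonneg _), exp_le_one_iff]
    exact mul_nonpos_of_nonpos_of_nonneg (neg_nonpos.2 hb.le) (abs_nonneg x)
  rcases eq_or_ne p 0 with rfl | hp0
  · exact memLp_zero_iff_aestronglyMeasurable.2 (by fun_prop)
  simpa using memLp_abs_rpow_mul_exp_neg_mul_abs hp0 hp (a := 0) (by simp) hb

noncomputable def besselIntegrand (s x y : ℝ) : ℝ :=
  exp (-(π * x ^ 2) / y - y / (4 * π)) * y ^ (-(1 + (1 - s) / 2))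

lemma besselKernel_eq_integral (s x : ℝ) :
    besselKernel s x = ∫ y in Ioi 0, besselIntegrand s x y := rfl

lemma measurable_uncurry_besselIntegrand (s : ℝ) :
    Measurable (Function.uncurry (besselIntegrand s)) := by
  unfold besselIntegrand; fun_prop

lemma measurable_besselIntegrand (s x : ℝ) : Measurable (besselIntegrand s x) :=
  (measurable_uncurry_besselIntegrand s).of_uncurry_left

lemma besselIntegrand_nonneg (s x : ℝ) {y : ℝ} (hy : 0 ≤ y) : 0 ≤ besselIntegrand s x y := by
  unfold besselIntegrand; positivity

lemma abs_le_pi_mul_sq_div_add_div (x : ℝ) {y : ℝ} (hy : 0 < y) :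
    |x| ≤ π * x ^ 2 / y + y / (4 * π) := by
  rw [div_add_div _ _ hy.ne' (by positivity), le_div_iff₀ (by positivity), ← sq_abs x]
  linarith [sq_nonneg (y - 2 * π * |x|)]

lemma besselIntegrand_le_exp_neg_div (s x : ℝ) {y : ℝ} (hy : 0 < y) :
    besselIntegrand s x y ≤
      exp (-2⁻¹ * |x|) * (y ^ (-(1 + (1 - s) / 2)) * exp (-(x ^ 2 * (π / 2)) / y)) := by
  rw [besselIntegrand, mul_left_comm, ← exp_add, mul_comm]
  gcongr
  have hamgm := abs_le_pi_mul_sq_div_add_div x hy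
  have : 0 ≤ y / (4 * π) := by positivity
  have : -(x ^ 2 * (π / 2)) / y = -(π * x ^ 2 / y) / 2 := by ring
  have : -(π * x ^ 2) / y = -(π * x ^ 2 / y) := by ring
  linarith

lemma besselIntegrand_le_exp_neg_mul (s x : ℝ) {y : ℝ} (hy : 0 < y) :
    besselIntegrand s x y ≤
      exp (-2⁻¹ * |x|) * (y ^ (-(1 + (1 - s) / 2)) * exp (-(8 * π)⁻¹ * y)) := by
  rw [besselIntegrand, mul_left_comm, ← exp_add, mul_comm]
  gcongr
  have hamgm := abs_le_pi_mul_sq_div_add_div x hy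
  have : 0 ≤ π * x ^ 2 / y := by positivity
  have : y / (4 * π) = 2 * ((8 * π)⁻¹ * y) := by field_simp; ring
  have : -(π * x ^ 2) / y = -(π * x ^ 2 / y) := by ring
  linarith

lemma integrableOn_besselIntegrand_of_lt_one {s x : ℝ} (hs : s < 1) (hx : x ≠ 0) :
    IntegrableOn (besselIntegrand s x) (Ioi 0) := by
  refine Integrable.mono' ((integrableOn_rpow_mul_exp_neg_div (a := -(1 + (1 - s) / 2))
    (by linarith) (by positivity : 0 < x ^ 2 * (π / 2))).const_mul (exp (-2⁻¹ * |x|)))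
    (measurable_besselIntegrand s x).aestronglyMeasurable
    (ae_restrict_of_forall_mem measurableSet_Ioi fun y (hy : 0 < y) => ?_)
  rw [norm_of_nonneg (besselIntegrand_nonneg s x hy.le)]
  exact besselIntegrand_le_exp_neg_div s x hy

lemma integrableOn_besselIntegrand_of_one_lt {s : ℝ} (hs : 1 < s) (x : ℝ) :
    IntegrableOn (besselIntegrand s x) (Ioi 0) := by
  refine Integrable.mono' ((integrableOn_rpow_mul_exp_neg_mul (a := -(1 + (1 - s) / 2))
    (by linarith) (by positivity : 0 < (8 * π)⁻¹)).const_mul (exp (-2⁻¹ * |x|)))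
    (measurable_besselIntegrand s x).aestronglyMeasurable
    (ae_restrict_of_forall_mem measurableSet_Ioi fun y (hy : 0 < y) => ?_)
  rw [norm_of_nonneg (besselIntegrand_nonneg s x hy.le)]
  exact besselIntegrand_le_exp_neg_mul s x hy

lemma measurable_besselKernel (s : ℝ) : Measurable (besselKernel s) :=
  (measurable_uncurry_besselIntegrand s).stronglyMeasurable.integral_prod_right'.measurable

lemma besselKernel_nonneg (s x : ℝ) : 0 ≤ besselKernel s x :=
  setIntegral_nonneg measurableSet_Ioi fun _ hy => besselIntegrand_nonneg s x (le_of_lt hy)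

lemma besselKernel_le_add {s s₁ s₂ x : ℝ} (h₁ : s₁ ≤ s) (h₂ : s ≤ s₂) (hs₁ : s₁ < 1)
    (hs₂ : 1 < s₂) (hx : x ≠ 0) :
    besselKernel s x ≤ besselKernel s₁ x + besselKernel s₂ x := by
  have hi₁ := integrableOn_besselIntegrand_of_lt_one hs₁ hx
  have hi₂ := integrableOn_besselIntegrand_of_one_lt hs₂ x
  simp only [besselKernel_eq_integral, ← integral_add hi₁ hi₂]
  refine setIntegral_mono_of_nonneg (fun y (hy : 0 < y) => besselIntegrand_nonneg s x hy.le)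
    (fun y (hy : 0 < y) => ?_) (hi₁.add hi₂)
  simp only [besselIntegrand, ← mul_add]
  gcongr
  exact rpow_le_rpow_add_rpow hy (by linarith) (by linarith)

lemma besselKernel_le_of_one_lt {s : ℝ} (hs : 1 < s) :
    ∃ C, ∀ x, besselKernel s x ≤ C * exp (-2⁻¹ * |x|) := by
  refine ⟨∫ y in Ioi 0, y ^ (-(1 + (1 - s) / 2)) * exp (-(8 * π)⁻¹ * y), fun x => ?_⟩
  calc besselKernel s x
      ≤ ∫ y in Ioi 0, exp (-2⁻¹ * |x|) * (y ^ (-(1 + (1 - s) / 2)) * exp (-(8 * π)⁻¹ * y)) :=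
        setIntegral_mono_of_nonneg (fun y (hy : 0 < y) => besselIntegrand_nonneg s x hy.le)
          (fun y hy => besselIntegrand_le_exp_neg_mul s x hy)
          ((integrableOn_rpow_mul_exp_neg_mul (by linarith) (by positivity)).const_mul _)
    _ = _ := by rw [integral_const_mul, mul_comm]

lemma besselKernel_le_of_lt_one {s : ℝ} (hs : s < 1) :
    ∃ C, ∀ x ≠ 0, besselKernel s x ≤ C * (|x| ^ (s - 1) * exp (-2⁻¹ * |x|)) := by
  refine ⟨∫ y in Ioi 0, y ^ (-(1 + (1 - s) / 2)) * exp (-(π / 2) / y), fun x hx => ?_⟩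
  have hx2 : 0 < x ^ 2 := by positivity
  calc besselKernel s x
      ≤ ∫ y in Ioi 0,
          exp (-2⁻¹ * |x|) * (y ^ (-(1 + (1 - s) / 2)) * exp (-(x ^ 2 * (π / 2)) / y)) :=
        setIntegral_mono_of_nonneg (fun y (hy : 0 < y) => besselIntegrand_nonneg s x hy.le)
          (fun y hy => besselIntegrand_le_exp_neg_div s x hy)
          ((integrableOn_rpow_mul_exp_neg_div (by linarith) (by positivity)).const_mul _)
    _ = exp (-2⁻¹ * |x|) * ((x ^ 2) ^ (-(1 + (1 - s) / 2) + 1) *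
          ∫ y in Ioi 0, y ^ (-(1 + (1 - s) / 2)) * exp (-(π / 2) / y)) := by
        rw [integral_const_mul, integral_rpow_mul_exp_neg_mul_div hx2]
    _ = _ := by
        rw [← sq_abs, ← rpow_natCast, ← rpow_mul (abs_nonneg x)]
        ring_nf

lemma memLp_besselKernel_of_one_lt {s : ℝ} (hs : 1 < s) (p : ℝ≥0∞) :
    MemLp (besselKernel s) p := by
  obtain ⟨C, hC⟩ := besselKernel_le_of_one_lt hs
  refine ((memLp_exp_neg_mul_abs p (by norm_num : (0 : ℝ) < 2⁻¹)).const_mul C).mono'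
    (measurable_besselKernel s).aestronglyMeasurable (ae_of_all _ fun x => ?_)
  rw [norm_of_nonneg (besselKernel_nonneg s x)]
  exact hC x

lemma memLp_besselKernel_of_lt_one {s : ℝ} {p : ℝ≥0∞} (hs : s < 1)
    (hsp : 1 - 1 / p.toReal < s) : MemLp (besselKernel s) p := by
  have hp0 : p ≠ 0 := by rintro rfl; simp at hsp; linarith
  have hp : p ≠ ∞ := by rintro rfl; simp at hsp; linarith
  have hsp' : -1 < (s - 1) * p.toReal := by
    rw [sub_lt_comm, lt_div_iff₀ (ENNReal.toReal_pos hp0 hp)] at hsp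
    linarith
  obtain ⟨C, hC⟩ := besselKernel_le_of_lt_one hs
  refine ((memLp_abs_rpow_mul_exp_neg_mul_abs hp0 hp hsp' (by norm_num : (0 : ℝ) < 2⁻¹)).const_mul
    C).mono' (measurable_besselKernel s).aestronglyMeasurable ?_
  filter_upwards [Measure.ae_ne volume 0] with x hx
  rw [norm_of_nonneg (besselKernel_nonneg s x)]
  exact hC x hx

theorem besselKernel_memLp_general (s : ℝ) (p : ℝ≥0∞)
    (hsp : 1 - 1 / p.toReal < s) :
    MemLp (besselKernel s) p (volume : Measure ℝ) := by
  rcases lt_or_ge 1 s with hs | hs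
  · exact memLp_besselKernel_of_one_lt hs p
  obtain ⟨s₁, hps₁, hs₁⟩ := exists_between hsp
  have h₁ : MemLp (besselKernel s₁) p := memLp_besselKernel_of_lt_one (by linarith) hps₁
  have h₂ : MemLp (besselKernel 2) p := memLp_besselKernel_of_one_lt one_lt_two p
  refine (h₁.add h₂).mono' (measurable_besselKernel s).aestronglyMeasurable ?_
  filter_upwards [Measure.ae_ne volume 0] with x hx
  rw [norm_of_nonneg (besselKernel_nonneg s x)]
  exact besselKernel_le_add hs₁.le (by linarith) (by linarith) one_lt_two hx

/-- For `s > 0` and `p ∈ [1,∞]` with `s > 1 - 1/p` (where `1/∞ = 0`), the Bessel kernel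
`G̃ₛ` belongs to `L^p(ℝ)`. -/
theorem besselKernel_memLp (s : ℝ) (hs : 0 < s) (p : ℝ≥0∞) (hp : 1 ≤ p)
    (hsp : 1 - 1 / p.toReal < s) :
    MemLp (besselKernel s) p (volume : Measure ℝ) :=
  besselKernel_memLp_general s p hsp
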